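/- The function g(x) = (1 − cos x)/(x − sin x) is strictly decreasing on the open interval (0, 2π), tends to +∞ as x → 0⁺, and tends to 0 as x → 2π⁻. Consequently, for every c > 0 there exists a unique x₀ ∈ (0, 2π) with (1 − cos x₀)/(x₀ − sin x₀) = c. -/

import Mathlib

/-!
The derivative of `g x = (1 - cos x) / (x - sin x)` has the sign of
`sin x * (x - sin x) - (1 - cos x) ^ 2`, which in half angles is
`-4 sin (x/2) (sin (x/2) - (x/2) cos (x/2))`, negative on `(0, 2π)` because `t cos t < sin t`
on `(0, π)`. Near `0` the bounds `1 - cos x ≥ 2x²/π²` and `x - sin x ≤ x³/6` give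
`g x ≥ 12/(π² x)`, while `g` is continuous at `2π` with value `0`. The intermediate value
theorem on `(0, 2π)` then yields the solution, and strict monotonicity its uniqueness.
-/

open Set Filter Topology Real

namespace Real

theorem mul_cos_lt_sin {t : ℝ} (ht₀ : 0 < t) (htπ : t < π) : t * cos t < sin t := by
  have hsin : 0 < sin t := sin_pos_of_pos_of_lt_pi ht₀ htπ
  rcases lt_or_ge t (π / 2) with ht | ht
  · have hcos : 0 < cos t := cos_pos_of_mem_Ioo ⟨by linarith, ht⟩
    have := lt_tan ht₀ ht
    rwa [tan_eq_sin_div_cos, lt_div_iff₀ hcos] at this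
  · have hcos : cos t ≤ 0 := cos_nonpos_of_pi_div_two_le_of_le ht (by linarith)
    nlinarith

theorem sin_mul_sub_sin_sub_sq_eq (x : ℝ) :
    sin x * (x - sin x) - (1 - cos x) ^ 2
      = -4 * sin (x / 2) * (sin (x / 2) - x / 2 * cos (x / 2)) := by
  have hsin : sin x = 2 * sin (x / 2) * cos (x / 2) := by
    rw [← sin_two_mul, mul_div_cancel₀ x two_ne_zero]
  have hcos : cos x = cos (x / 2) ^ 2 - sin (x / 2) ^ 2 := by
    rw [← cos_two_mul', mul_div_cancel₀ x two_ne_zero]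
  rw [hsin, hcos]
  linear_combination (1 - sin (x / 2) ^ 2 - cos (x / 2) ^ 2) * sin_sq_add_cos_sq (x / 2)

theorem sin_mul_sub_sin_lt_sq {x : ℝ} (hx₀ : 0 < x) (hx : x < 2 * π) :
    sin x * (x - sin x) < (1 - cos x) ^ 2 := by
  have hs : 0 < sin (x / 2) := sin_pos_of_pos_of_lt_pi (by linarith) (by linarith)
  have hk : x / 2 * cos (x / 2) < sin (x / 2) := mul_cos_lt_sin (by linarith) (by linarith)
  rw [← sub_neg, sin_mul_sub_sin_sub_sq_eq]
  linarith [mul_pos hs (sub_pos.2 hk)]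

theorem hasDerivAt_one_sub_cos_div_sub_sin {x : ℝ} (hx : x - sin x ≠ 0) :
    HasDerivAt (fun x : ℝ => (1 - cos x) / (x - sin x))
      ((sin x * (x - sin x) - (1 - cos x) ^ 2) / (x - sin x) ^ 2) x := by
  have hnum : HasDerivAt (fun x : ℝ => 1 - cos x) (sin x) x := by
    simpa using (hasDerivAt_cos x).const_sub 1
  have hden : HasDerivAt (fun x : ℝ => x - sin x) (1 - cos x) x :=
    (hasDerivAt_id x).sub (hasDerivAt_sin x)
  exact (hnum.div hden hx).congr_deriv (by ring)

theorem continuousOn_one_sub_cos_div_sub_sin :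
    ContinuousOn (fun x : ℝ => (1 - cos x) / (x - sin x)) (Ioi 0) :=
  ContinuousOn.div (by fun_prop) (by fun_prop) fun _ hx => (sub_pos.2 (sin_lt hx)).ne'

theorem strictAntiOn_one_sub_cos_div_sub_sin :
    StrictAntiOn (fun x : ℝ => (1 - cos x) / (x - sin x)) (Ioo 0 (2 * π)) := by
  refine strictAntiOn_of_deriv_neg (convex_Ioo 0 (2 * π))
    (continuousOn_one_sub_cos_div_sub_sin.mono Ioo_subset_Ioi_self) fun x hx => ?_
  rw [interior_Ioo] at hx
  have hden : 0 < x - sin x := sub_pos.2 (sin_lt hx.1)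
  rw [(hasDerivAt_one_sub_cos_div_sub_sin hden.ne').deriv]
  exact div_neg_of_neg_of_pos (sub_neg.2 (sin_mul_sub_sin_lt_sq hx.1 hx.2)) (by positivity)

theorem inv_mul_le_one_sub_cos_div_sub_sin {x : ℝ} (hx₀ : 0 < x) (hx : x ≤ π) :
    12 / π ^ 2 * x⁻¹ ≤ (1 - cos x) / (x - sin x) := by
  have hnum : 2 / π ^ 2 * x ^ 2 ≤ 1 - cos x := by
    linarith [cos_le_one_sub_mul_cos_sq (x := x) (by rwa [abs_of_pos hx₀])]
  have hden : x - sin x < x ^ 3 / 6 := by linarith [sin_gt_sub_cube hx₀]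
  calc 12 / π ^ 2 * x⁻¹ = 2 / π ^ 2 * x ^ 2 / (x ^ 3 / 6) := by field_simp; norm_num
    _ ≤ (1 - cos x) / (x ^ 3 / 6) := by gcongr
    _ ≤ (1 - cos x) / (x - sin x) :=
      div_le_div_of_nonneg_left (sub_nonneg.2 (cos_le_one x)) (sub_pos.2 (sin_lt hx₀)) hden.le

theorem tendsto_one_sub_cos_div_sub_sin_nhdsGT_zero :
    Tendsto (fun x : ℝ => (1 - cos x) / (x - sin x)) (𝓝[>] 0) atTop := by
  refine tendsto_atTop_mono' _ ?_
    (tendsto_inv_nhdsGT_zero.const_mul_atTop (by positivity : (0 : ℝ) < 12 / π ^ 2))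
  filter_upwards [Ioo_mem_nhdsGT pi_pos] with x hx
  exact inv_mul_le_one_sub_cos_div_sub_sin hx.1 hx.2.le

theorem tendsto_one_sub_cos_div_sub_sin_nhdsLT_two_pi :
    Tendsto (fun x : ℝ => (1 - cos x) / (x - sin x)) (𝓝[<] (2 * π)) (𝓝 0) := by
  have hcont := continuousOn_one_sub_cos_div_sub_sin.continuousAt
    (Ioi_mem_nhds (by positivity : (0 : ℝ) < 2 * π))
  simpa [cos_two_pi] using hcont.tendsto.mono_left nhdsWithin_le_nhds

end Real

theorem g_strictAnti_and_unique_solution :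
    StrictAntiOn (fun x : ℝ => (1 - Real.cos x) / (x - Real.sin x))
      (Ioo 0 (2 * Real.pi)) ∧
    Tendsto (fun x : ℝ => (1 - Real.cos x) / (x - Real.sin x))
      (nhdsWithin 0 (Ioi 0)) atTop ∧
    Tendsto (fun x : ℝ => (1 - Real.cos x) / (x - Real.sin x))
      (nhdsWithin (2 * Real.pi) (Iio (2 * Real.pi))) (nhds 0) ∧
    ∀ c : ℝ, 0 < c → ∃! x₀ : ℝ, x₀ ∈ Ioo 0 (2 * Real.pi) ∧
      (1 - Real.cos x₀) / (x₀ - Real.sin x₀) = c := by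
  have hanti := strictAntiOn_one_sub_cos_div_sub_sin
  have hzero := tendsto_one_sub_cos_div_sub_sin_nhdsGT_zero
  have htwoPi := tendsto_one_sub_cos_div_sub_sin_nhdsLT_two_pi
  refine ⟨hanti, hzero, htwoPi, fun c hc => ?_⟩
  obtain ⟨x₀, hx₀, hgx₀⟩ := isPreconnected_Ioo.intermediate_value_Ioi
    (le_principal_iff.2 (Ioo_mem_nhdsLT two_pi_pos))
    (le_principal_iff.2 (Ioo_mem_nhdsGT two_pi_pos))
    (continuousOn_one_sub_cos_div_sub_sin.mono Ioo_subset_Ioi_self) htwoPi hzero hc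
  exact ⟨x₀, ⟨hx₀, hgx₀⟩, fun y hy => hanti.injOn hy.1 hx₀ (hy.2.trans hgx₀.symm)⟩
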